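/- Suppose each 𝒰(x) admits a representative set ℛ(x) ⊆ 𝒰(x) with |ℛ(x)| ≤ k such that every u ∈ 𝒰(x) is within total variation distance ε' of some r ∈ ℛ(x). Let S = S_c ∪ S_p and S' = S'_c ∪ S'_p be two independent samples, each with n ≥ 13/ε² clean examples drawn i.i.d. from 𝒟 and m ≥ (32/ε²)·log(200/ε) perturbations drawn i.i.d. from each r ∈ ℛ(x) for each clean example (x,y). Let A be the event that there exists h ∈ ℋ with DR_S(h) = 0 but DR_𝒟(h) ≥ ε + ε', and let B be the event that there exists h ∈ ℋ with DR_S(h) = 0 but DR_{S'}(h) ≥ ε/2. Then P(B) ≥ (2/5)·P(A). -/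

import Mathlib

open MeasureTheory

/-- Distributional adversarial loss `DR_D(h)` for a (possibly infinite) family `U x` of
perturbation distributions: `DR_D(h) = E_{(x,y)∼D}[ sup_{u ∈ U(x)} E_{z∼u} 1[h(z) ≠ y] ]`. -/
noncomputable def trueDRSet {X : Type*} [MeasurableSpace X]
    (D : Measure (X × Bool)) (U : X → Set (Measure X)) (h : X → Bool) : ℝ :=
  ∫ xy, ⨆ u ∈ U xy.1, (u {z | h z ≠ xy.2}).toReal ∂D

/-- Empirical distributional adversarial loss of `h` on the sample `(Sc, Sp)` where `Sc` is
the clean sample and `Sp i j l` is the `l`-th perturbation of the `i`-th clean example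
drawn from its `j`-th perturbation distribution:
`DR_S(h) = (1/n) Σ_i max_j (1/m) Σ_l 1[h(Sp i j l) ≠ yᵢ]`. -/
noncomputable def empDR {X : Type*} {k n m : ℕ}
    (h : X → Bool) (Sc : Fin n → X × Bool) (Sp : Fin n → Fin k → Fin m → X) : ℝ :=
  (1 / (n : ℝ)) * ∑ i : Fin n, ⨆ j : Fin k,
    (1 / (m : ℝ)) * ∑ l : Fin m, (if h (Sp i j l) ≠ (Sc i).2 then (1 : ℝ) else 0)

/-- Distribution of the training sample `S = S_c ∪ S_p`: `n` i.i.d. clean examples from `D`,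
and, conditionally on the clean sample, for each clean example `(x,y)` and each `j < k`,
`m` i.i.d. perturbations drawn from `U x j`. -/
noncomputable def sampleMeasure {X : Type*} [MeasurableSpace X] {k : ℕ}
    (D : Measure (X × Bool)) (U : X → Fin k → Measure X) (n m : ℕ) :
    Measure ((Fin n → X × Bool) × (Fin n → Fin k → Fin m → X)) :=
  (Measure.pi fun _ : Fin n => D).bind fun sc =>
    (Measure.pi fun i : Fin n =>
        Measure.pi fun j : Fin k =>
          Measure.pi fun _ : Fin m => U (sc i).1 j).map
      fun sp => (sc, sp)

/-! Fix `h` with `DR_D(h) ≥ ε + ε'`. On a fresh sample `S'`, `DR_{S'}(h)` is the average of the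
`n` per-example losses `max_j (1/m) Σ_l 1[h(z_{ijl}) ≠ yᵢ]`, which lie in `[0,1]` and are
pairwise uncorrelated. Each has mean at least `DR_D(h) - ε' ≥ ε`: the maximum over the
representatives dominates, in expectation, the error of every `R x j`, and every `u ∈ U x` is
within `ε'` of one of them. Chebyshev then gives `P(DR_{S'}(h) < ε/2) ≤ 1/(nε²) ≤ 1/13`, so every
`S ∈ A` has a section of `B` of measure at least `2/5`, and Fubini concludes. -/

open MeasureTheory ProbabilityTheory
open scoped ENNReal

section Pi

variable {ι : Type*} [Fintype ι] {Ω : ι → Type*} [∀ i, MeasurableSpace (Ω i)]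
  {μ : ∀ i, Measure (Ω i)} [∀ i, IsProbabilityMeasure (μ i)]

theorem lintegral_comp_eval_pi {i : ι} {f : Ω i → ℝ≥0∞} (hf : AEMeasurable f (μ i)) :
    ∫⁻ x, f (x i) ∂Measure.pi μ = ∫⁻ y, f y ∂μ i := by
  rw [← (measurePreserving_eval μ i).map_eq] at hf ⊢
  exact lintegral_map' hf (measurable_pi_apply i).aemeasurable |>.symm

theorem lintegral_mul_comp_eval_pi {F : ∀ i, Ω i → ℝ≥0∞} (hF : ∀ i, AEMeasurable (F i) (μ i))
    {i j : ι} (hij : i ≠ j) :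
    ∫⁻ x, F i (x i) * F j (x j) ∂Measure.pi μ = (∫⁻ y, F i y ∂μ i) * ∫⁻ y, F j y ∂μ j := by
  refine (lintegral_mul_eq_lintegral_mul_lintegral_of_indepFun''
      ((hF i).comp_quasiMeasurePreserving (Measure.quasiMeasurePreserving_eval μ i))
      ((hF j).comp_quasiMeasurePreserving (Measure.quasiMeasurePreserving_eval μ j))
      ((iIndepFun_pi hF).indepFun hij)).trans ?_
  exact congrArg₂ (· * ·) (lintegral_comp_eval_pi (hF i)) (lintegral_comp_eval_pi (hF j))

end Pi

theorem MeasureTheory.AEStronglyMeasurable.of_comp_eval {α γ : Type*} [MeasurableSpace α]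
    [TopologicalSpace γ] {μ : Measure α} [IsProbabilityMeasure μ] {n : ℕ} {g : α → γ} (i : Fin n)
    (hg : AEStronglyMeasurable (fun x : Fin n → α => g (x i)) (Measure.pi fun _ => μ)) :
    AEStronglyMeasurable g μ := by
  obtain ⟨n, rfl⟩ := Nat.exists_eq_succ_of_ne_zero i.pos.ne'
  let e := MeasurableEquiv.piFinSuccAbove (fun _ : Fin (n + 1) => α) i
  have he := measurePreserving_piFinSuccAbove (fun _ : Fin (n + 1) => μ) i
  refine AEStronglyMeasurable.of_comp_fst (ν := Measure.pi fun _ : Fin n => μ) ?_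
    (IsProbabilityMeasure.ne_zero _)
  rw [← he.map_eq, e.measurableEmbedding.aestronglyMeasurable_map_iff]
  exact hg

theorem le_measure_prod_of_le_measure_preimage {α β : Type*} [MeasurableSpace α]
    [MeasurableSpace β] {μ : Measure α} {ν : Measure β} [IsProbabilityMeasure ν] {A : Set α}
    {B : Set (α × β)} {c : ℝ≥0∞} (h : ∀ a ∈ A, c ≤ ν (Prod.mk a ⁻¹' B)) :
    c * μ.prod ν (Prod.fst ⁻¹' A) ≤ μ.prod ν B := by
  set V := toMeasurable (μ.prod ν) B
  have hV : MeasurableSet V := measurableSet_toMeasurable _ _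
  set T := {a | c ≤ ν (Prod.mk a ⁻¹' V)}
  have hAT : A ⊆ T := fun a ha =>
    (h a ha).trans (measure_mono fun b hb => subset_toMeasurable _ _ hb)
  rw [← Set.prod_univ, Measure.prod_prod, measure_univ, mul_one]
  calc c * μ A ≤ c * μ T := by gcongr
    _ = ∫⁻ _ in T, c ∂μ := (setLIntegral_const T c).symm
    _ ≤ ∫⁻ a in T, ν (Prod.mk a ⁻¹' V) ∂μ :=
        setLIntegral_mono (measurable_measure_prodMk_left hV) fun a ha => ha
    _ ≤ ∫⁻ a, ν (Prod.mk a ⁻¹' V) ∂μ := setLIntegral_le_lintegral T _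
    _ = μ.prod ν B := by rw [← Measure.prod_apply hV, measure_toMeasurable]

section Chebyshev

variable {Ω : Type*} [MeasurableSpace Ω] {P : Measure Ω} [IsProbabilityMeasure P]

theorem variance_sum_le_of_pairwise_uncorrelated {ι : Type*} [Fintype ι] {Z : ι → Ω → ℝ}
    (hZ : ∀ i, Measurable (Z i)) (hZ01 : ∀ i ω, Z i ω ∈ Set.Icc 0 1)
    (hunc : Pairwise fun i j => ∫ ω, Z i ω * Z j ω ∂P = (∫ ω, Z i ω ∂P) * ∫ ω, Z j ω ∂P) :
    Var[fun ω => ∑ i, Z i ω; P] ≤ Fintype.card ι / 4 := by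
  have hL2 : ∀ i, MemLp (Z i) 2 P := fun i =>
    memLp_of_bounded (Filter.Eventually.of_forall (hZ01 i)) (hZ i).aestronglyMeasurable 2
  have hoff : ∀ i j, i ≠ j → cov[Z i, Z j; P] = 0 := fun i j hij => by
    rw [covariance_eq_sub (hL2 i) (hL2 j)]
    simp [hunc hij]
  calc Var[fun ω => ∑ i, Z i ω; P] = ∑ i, ∑ j, cov[Z i, Z j; P] := variance_fun_sum hL2
    _ = ∑ i, Var[Z i; P] := Finset.sum_congr rfl fun i _ => by
      rw [Finset.sum_eq_single i (fun j _ hji => hoff i j hji.symm) (by simp),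
        covariance_self (hZ i).aemeasurable]
    _ ≤ ∑ _i : ι, ((1 - 0) / 2) ^ 2 := by
      gcongr with i
      exact variance_le_sq_of_bounded (Filter.Eventually.of_forall (hZ01 i)) (hZ i).aemeasurable
    _ = Fintype.card ι / 4 := by norm_num [div_eq_mul_inv]

theorem measure_average_lt_le {n : ℕ} {Z : Fin n → Ω → ℝ} (hZ : ∀ i, Measurable (Z i))
    (hZ01 : ∀ i ω, Z i ω ∈ Set.Icc 0 1)
    (hunc : Pairwise fun i j => ∫ ω, Z i ω * Z j ω ∂P = (∫ ω, Z i ω ∂P) * ∫ ω, Z j ω ∂P)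
    (hn : n ≠ 0) {t c : ℝ} (hc : 0 < c) (hmean : ∀ i, t + c ≤ ∫ ω, Z i ω ∂P) :
    P {ω | 1 / (n : ℝ) * ∑ i, Z i ω < t} ≤ ENNReal.ofReal (1 / (4 * n * c ^ 2)) := by
  set W := fun ω => 1 / (n : ℝ) * ∑ i, Z i ω
  have hW : MemLp W 2 P := (memLp_finsetSum _ fun i _ => memLp_of_bounded
    (Filter.Eventually.of_forall (hZ01 i)) (hZ i).aestronglyMeasurable 2).const_mul _
  have hEW : t + c ≤ P[W] := by
    rw [integral_const_mul, integral_finsetSum _ fun i _ =>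
      Integrable.of_mem_Icc 0 1 (hZ i).aemeasurable (Filter.Eventually.of_forall (hZ01 i))]
    calc t + c = 1 / (n : ℝ) * ∑ _i : Fin n, (t + c) := by field_simp; simp; ring
      _ ≤ 1 / (n : ℝ) * ∑ i, ∫ ω, Z i ω ∂P := by gcongr with i; exact hmean i
  have hvar : Var[W; P] ≤ (1 / n) ^ 2 * (n / 4) := by
    rw [variance_const_mul]
    gcongr
    simpa using variance_sum_le_of_pairwise_uncorrelated hZ hZ01 hunc
  calc P {ω | W ω < t} ≤ P {ω | c ≤ |W ω - P[W]|} := measure_mono fun ω (hω : W ω < t) => by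
        show c ≤ |W ω - P[W]|
        rw [abs_sub_comm]
        exact le_abs.2 (Or.inl (by linarith))
    _ ≤ ENNReal.ofReal (Var[W; P] / c ^ 2) := meas_ge_le_variance_div_sq hW hc
    _ ≤ ENNReal.ofReal (1 / (4 * n * c ^ 2)) := by
      refine ENNReal.ofReal_le_ofReal
        ((div_le_div_of_nonneg_right hvar (by positivity)).trans_eq ?_)
      field_simp

end Chebyshev

section Model

variable {X : Type*} {k n m : ℕ}

noncomputable def perturbLoss (h : X → Bool) (y : Bool) (w : Fin k → Fin m → X) : ℝ≥0∞ :=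
  ⨆ j, (m : ℝ≥0∞)⁻¹ * ∑ l, {z | h z ≠ y}.indicator 1 (w j l)

theorem perturbLoss_le_one (h : X → Bool) (y : Bool) (w : Fin k → Fin m → X) :
    perturbLoss h y w ≤ 1 := by
  refine iSup_le fun j =>
    (mul_le_mul_right (?_ : _ ≤ (m : ℝ≥0∞)) _).trans (ENNReal.inv_mul_le_one _)
  calc ∑ l, {z | h z ≠ y}.indicator 1 (w j l) ≤ ∑ _l : Fin m, (1 : ℝ≥0∞) :=
        Finset.sum_le_sum fun l _ => Set.indicator_le_self' (fun _ _ => zero_le_one) _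
    _ = m := by simp

theorem empDR_eq (h : X → Bool) (Sc : Fin n → X × Bool) (Sp : Fin n → Fin k → Fin m → X) :
    empDR h Sc Sp = 1 / (n : ℝ) * ∑ i, (perturbLoss h (Sc i).2 (Sp i)).toReal := by
  unfold empDR
  congr 1
  refine Finset.sum_congr rfl fun i _ => ?_
  rw [perturbLoss, ENNReal.toReal_iSup fun j => ne_top_of_le_ne_top ENNReal.one_ne_top
    ((le_iSup (fun j => (m : ℝ≥0∞)⁻¹ * ∑ l, {z | h z ≠ (Sc i).2}.indicator 1 (Sp i j l)) j).trans
      (perturbLoss_le_one h (Sc i).2 (Sp i)))]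
  congr 1 with j
  rw [ENNReal.toReal_mul, ENNReal.toReal_inv, ENNReal.toReal_natCast, one_div,
    ENNReal.toReal_sum fun l _ => ?_]
  · simp [Set.indicator_apply, apply_ite ENNReal.toReal]
  · unfold Set.indicator; split_ifs <;> simp

variable [MeasurableSpace X]

noncomputable def perturbKernel (R : X → Fin k → Measure X) (m : ℕ) (x : X) :
    Measure (Fin k → Fin m → X) :=
  Measure.pi fun j => Measure.pi fun _ : Fin m => R x j

noncomputable def sampleFiber (R : X → Fin k → Measure X) (n m : ℕ) (sc : Fin n → X × Bool) :
    Measure ((Fin n → X × Bool) × (Fin n → Fin k → Fin m → X)) :=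
  (Measure.pi fun i => perturbKernel R m (sc i).1).map (Prod.mk sc)

theorem sampleMeasure_eq_bind (D : Measure (X × Bool)) (R : X → Fin k → Measure X) (n m : ℕ) :
    sampleMeasure D R n m = (Measure.pi fun _ => D).bind (sampleFiber R n m) :=
  rfl

noncomputable def expectedPerturbLoss (h : X → Bool) (R : X → Fin k → Measure X) (m : ℕ)
    (xy : X × Bool) : ℝ≥0∞ :=
  ∫⁻ w, perturbLoss h xy.2 w ∂perturbKernel R m xy.1

variable {R : X → Fin k → Measure X} {h : X → Bool}

instance [∀ x j, IsProbabilityMeasure (R x j)] (x : X) :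
    IsProbabilityMeasure (perturbKernel R m x) := by
  unfold perturbKernel; infer_instance

theorem measurable_perturbLoss (hh : Measurable h) (y : Bool) :
    Measurable (perturbLoss h y (k := k) (m := m)) :=
  .iSup fun j => .const_mul (Finset.measurable_sum _ fun l _ =>
    (measurable_one.indicator (hh (measurableSet_singleton y)).compl).comp
      ((measurable_pi_apply l).comp (measurable_pi_apply j))) _

theorem measurable_perturbLoss_sample (hh : Measurable h) (i : Fin n) :
    Measurable fun s : (Fin n → X × Bool) × (Fin n → Fin k → Fin m → X) =>
      perturbLoss h (s.1 i).2 (s.2 i) := by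
  have hL : Measurable fun p : (Fin k → Fin m → X) × Bool => perturbLoss h p.2 p.1 :=
    measurable_from_prod_countable_left fun y => measurable_perturbLoss hh y
  have hp : Measurable fun s : (Fin n → X × Bool) × (Fin n → Fin k → Fin m → X) =>
      (s.2 i, (s.1 i).2) :=
    ((measurable_pi_apply i).comp measurable_snd).prodMk
      (measurable_snd.comp ((measurable_pi_apply i).comp measurable_fst))
  exact (hL.comp hp :)

theorem measure_le_expectedPerturbLoss [∀ x j, IsProbabilityMeasure (R x j)] (hm : m ≠ 0)
    (hh : Measurable h) (x : X) (y : Bool) (j : Fin k) :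
    R x j {z | h z ≠ y} ≤ expectedPerturbLoss h R m (x, y) := by
  have hE : MeasurableSet {z | h z ≠ y} := (hh (measurableSet_singleton y)).compl
  have hind : Measurable ({z | h z ≠ y}.indicator (1 : X → ℝ≥0∞)) := measurable_one.indicator hE
  have hv (l : Fin m) : Measurable fun v : Fin m → X => {z | h z ≠ y}.indicator 1 (v l) :=
    hind.comp (measurable_pi_apply l)
  have hw (l : Fin m) :
      Measurable fun w : Fin k → Fin m → X => {z | h z ≠ y}.indicator 1 (w j l) :=
    (hv l).comp (measurable_pi_apply j)
  have hcoord (l : Fin m) :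
      ∫⁻ w, {z | h z ≠ y}.indicator 1 (w j l) ∂perturbKernel R m x = R x j {z | h z ≠ y} := by
    calc ∫⁻ w, {z | h z ≠ y}.indicator 1 (w j l) ∂perturbKernel R m x
        = ∫⁻ v, {z | h z ≠ y}.indicator 1 (v l) ∂Measure.pi fun _ : Fin m => R x j :=
          lintegral_comp_eval_pi (μ := fun j => Measure.pi fun _ : Fin m => R x j) (i := j)
            (f := fun v : Fin m → X => {z | h z ≠ y}.indicator 1 (v l)) (hv l).aemeasurable
      _ = ∫⁻ z, {z | h z ≠ y}.indicator 1 z ∂(R x j) := lintegral_comp_eval_pi hind.aemeasurable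
      _ = R x j {z | h z ≠ y} := lintegral_indicator_one hE
  calc R x j {z | h z ≠ y} = (m : ℝ≥0∞)⁻¹ * ∑ _l : Fin m, R x j {z | h z ≠ y} := by
        rw [Finset.sum_const, Finset.card_univ, Fintype.card_fin, nsmul_eq_mul, ← mul_assoc,
          ENNReal.inv_mul_cancel (Nat.cast_ne_zero.2 hm) (ENNReal.natCast_ne_top m), one_mul]
    _ = ∫⁻ w, (m : ℝ≥0∞)⁻¹ * ∑ l, {z | h z ≠ y}.indicator 1 (w j l) ∂perturbKernel R m x := by
        rw [lintegral_const_mul _ (Finset.measurable_sum _ fun l _ => hw l),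
          lintegral_finsetSum _ fun l _ => hw l]
        simp_rw [hcoord]
    _ ≤ expectedPerturbLoss h R m (x, y) := lintegral_mono fun w =>
        le_iSup (fun j => (m : ℝ≥0∞)⁻¹ * ∑ l, {z | h z ≠ y}.indicator 1 (w j l)) j

theorem expectedPerturbLoss_le_one [∀ x j, IsProbabilityMeasure (R x j)] (xy : X × Bool) :
    expectedPerturbLoss h R m xy ≤ 1 :=
  (lintegral_mono fun w => perturbLoss_le_one h xy.2 w).trans_eq (by simp)

theorem iSup_measure_toReal_le [∀ x j, IsProbabilityMeasure (R x j)] (hm : m ≠ 0)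
    (hh : Measurable h) {U : Set (Measure X)} {ε' : ℝ} (hε' : 0 ≤ ε') (x : X) (y : Bool)
    (hcov : ∀ u ∈ U, ∃ j : Fin k, ∀ s : Set X, MeasurableSet s →
      |(u s).toReal - (R x j s).toReal| ≤ ε') :
    ⨆ u ∈ U, (u {z | h z ≠ y}).toReal ≤ (expectedPerturbLoss h R m (x, y)).toReal + ε' := by
  have hB : 0 ≤ (expectedPerturbLoss h R m (x, y)).toReal + ε' := by positivity
  refine Real.iSup_le (fun u => Real.iSup_le (fun hu => ?_) hB) hB
  obtain ⟨j, hj⟩ := hcov u hu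
  have hRj : (R x j {z | h z ≠ y}).toReal ≤ (expectedPerturbLoss h R m (x, y)).toReal :=
    ENNReal.toReal_mono (ne_top_of_le_ne_top ENNReal.one_ne_top (expectedPerturbLoss_le_one _))
      (measure_le_expectedPerturbLoss hm hh x y j)
  linarith [(abs_le.1 (hj {z | h z ≠ y} (hh (measurableSet_singleton y)).compl)).2]

theorem trueDRSet_le [∀ x j, IsProbabilityMeasure (R x j)] {D : Measure (X × Bool)}
    [IsProbabilityMeasure D] {U : X → Set (Measure X)} {ε' : ℝ} (hm : m ≠ 0) (hh : Measurable h)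
    (hε' : 0 ≤ ε') (hcov : ∀ x, ∀ u ∈ U x, ∃ j : Fin k, ∀ s : Set X, MeasurableSet s →
      |(u s).toReal - (R x j s).toReal| ≤ ε')
    (hL : AEMeasurable (expectedPerturbLoss h R m) D) :
    trueDRSet D U h ≤ (∫⁻ xy, expectedPerturbLoss h R m xy ∂D).toReal + ε' := by
  have hint : Integrable (fun xy => (expectedPerturbLoss h R m xy).toReal) D :=
    .mono' (integrable_const 1) hL.ennreal_toReal.aestronglyMeasurable (ae_of_all _ fun xy => by
      simpa using ENNReal.toReal_mono ENNReal.one_ne_top (expectedPerturbLoss_le_one _))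
  by_cases hq : Integrable (fun xy : X × Bool => ⨆ u ∈ U xy.1, (u {z | h z ≠ xy.2}).toReal) D
  · calc trueDRSet D U h ≤ ∫ xy, ((expectedPerturbLoss h R m xy).toReal + ε') ∂D :=
          integral_mono hq (hint.add (integrable_const ε')) fun xy =>
            iSup_measure_toReal_le hm hh hε' xy.1 xy.2 (hcov xy.1)
      _ = _ := by
          rw [integral_add hint (integrable_const _), integral_toReal hL (ae_of_all _ fun xy =>
            (expectedPerturbLoss_le_one _).trans_lt ENNReal.one_lt_top)]
          simp
  · rw [trueDRSet, integral_undef hq]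
    positivity

section Sample

variable {D : Measure (X × Bool)}

theorem sampleMeasure_eq_zero (hf : ¬AEMeasurable (sampleFiber R n m) (Measure.pi fun _ => D)) :
    sampleMeasure D R n m = 0 := by
  rw [sampleMeasure_eq_bind, Measure.bind, Measure.map_of_not_aemeasurable hf, Measure.join_zero]

theorem lintegral_sampleFiber (sc : Fin n → X × Bool)
    {φ : (Fin n → X × Bool) × (Fin n → Fin k → Fin m → X) → ℝ≥0∞} (hφ : Measurable φ) :
    ∫⁻ s, φ s ∂sampleFiber R n m sc =
      ∫⁻ sp, φ (sc, sp) ∂Measure.pi fun i => perturbKernel R m (sc i).1 :=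
  lintegral_map hφ measurable_prodMk_left

theorem lintegral_sampleMeasure (hf : AEMeasurable (sampleFiber R n m) (Measure.pi fun _ => D))
    {φ : (Fin n → X × Bool) × (Fin n → Fin k → Fin m → X) → ℝ≥0∞} (hφ : Measurable φ) :
    ∫⁻ s, φ s ∂sampleMeasure D R n m =
      ∫⁻ sc, ∫⁻ sp, φ (sc, sp) ∂Measure.pi (fun i => perturbKernel R m (sc i).1)
        ∂Measure.pi fun _ => D := by
  rw [sampleMeasure_eq_bind, Measure.lintegral_bind hf hφ.aemeasurable]
  exact lintegral_congr fun sc => lintegral_sampleFiber sc hφ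

variable [∀ x j, IsProbabilityMeasure (R x j)] [IsProbabilityMeasure D]

theorem isProbabilityMeasure_sampleMeasure
    (hf : AEMeasurable (sampleFiber R n m) (Measure.pi fun _ => D)) :
    IsProbabilityMeasure (sampleMeasure D R n m) :=
  ⟨by simpa using lintegral_sampleMeasure hf (measurable_const (a := (1 : ℝ≥0∞)))⟩

/-- No measurability of `x ↦ R x j` is assumed: the a.e.-measurability of the expected loss is
extracted from that of the sample kernel. -/
theorem aemeasurable_expectedPerturbLoss
    (hf : AEMeasurable (sampleFiber R n m) (Measure.pi fun _ => D)) (hh : Measurable h)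
    (i : Fin n) : AEMeasurable (expectedPerturbLoss h R m) D := by
  have hG :=
    (Measure.measurable_lintegral (measurable_perturbLoss_sample hh i)).comp_aemeasurable hf
  have heq : (fun sc => ∫⁻ s, perturbLoss h (s.1 i).2 (s.2 i) ∂sampleFiber R n m sc) =
      fun sc => expectedPerturbLoss h R m (sc i) := by
    funext sc
    rw [lintegral_sampleFiber sc (measurable_perturbLoss_sample hh i)]
    exact lintegral_comp_eval_pi (μ := fun i => perturbKernel R m (sc i).1) (i := i)
      (f := perturbLoss h (sc i).2) (measurable_perturbLoss hh _).aemeasurable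
  rw [Function.comp_def, heq] at hG
  exact aestronglyMeasurable_iff_aemeasurable.1 (.of_comp_eval i hG.aestronglyMeasurable)

theorem lintegral_perturbLoss_sampleMeasure
    (hf : AEMeasurable (sampleFiber R n m) (Measure.pi fun _ => D)) (hh : Measurable h)
    (i : Fin n) :
    ∫⁻ s, perturbLoss h (s.1 i).2 (s.2 i) ∂sampleMeasure D R n m =
      ∫⁻ xy, expectedPerturbLoss h R m xy ∂D :=
  calc _ = ∫⁻ sc, expectedPerturbLoss h R m (sc i) ∂Measure.pi fun _ => D := by
        rw [lintegral_sampleMeasure hf (measurable_perturbLoss_sample hh i)]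
        exact lintegral_congr fun sc => lintegral_comp_eval_pi
          (μ := fun i => perturbKernel R m (sc i).1) (i := i) (f := perturbLoss h (sc i).2)
          (measurable_perturbLoss hh _).aemeasurable
    _ = _ := lintegral_comp_eval_pi (aemeasurable_expectedPerturbLoss hf hh i)

theorem lintegral_perturbLoss_mul_sampleMeasure
    (hf : AEMeasurable (sampleFiber R n m) (Measure.pi fun _ => D)) (hh : Measurable h)
    {i j : Fin n} (hij : i ≠ j) :
    ∫⁻ s, perturbLoss h (s.1 i).2 (s.2 i) * perturbLoss h (s.1 j).2 (s.2 j)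
        ∂sampleMeasure D R n m =
      (∫⁻ xy, expectedPerturbLoss h R m xy ∂D) * ∫⁻ xy, expectedPerturbLoss h R m xy ∂D :=
  calc _ = ∫⁻ sc, expectedPerturbLoss h R m (sc i) * expectedPerturbLoss h R m (sc j)
        ∂Measure.pi fun _ => D := by
        rw [lintegral_sampleMeasure hf
          ((measurable_perturbLoss_sample hh i).fun_mul (measurable_perturbLoss_sample hh j))]
        exact lintegral_congr fun sc => lintegral_mul_comp_eval_pi
          (F := fun i => perturbLoss h (sc i).2)
          (fun _ => (measurable_perturbLoss hh _).aemeasurable) hij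
    _ = _ := lintegral_mul_comp_eval_pi (F := fun _ => expectedPerturbLoss h R m)
          (fun _ => aemeasurable_expectedPerturbLoss hf hh i) hij

theorem sampleMeasure_empDR_lt_le
    (hf : AEMeasurable (sampleFiber R n m) (Measure.pi fun _ => D)) (hh : Measurable h)
    (hn : 0 < n) (hm : m ≠ 0) {U : X → Set (Measure X)} {ε ε' : ℝ} (hε : 0 < ε) (hε' : 0 ≤ ε')
    (hcov : ∀ x, ∀ u ∈ U x, ∃ j : Fin k, ∀ s : Set X, MeasurableSet s →
      |(u s).toReal - (R x j s).toReal| ≤ ε')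
    (hDR : ε + ε' ≤ trueDRSet D U h) :
    sampleMeasure D R n m {s | empDR h s.1 s.2 < ε / 2} ≤ ENNReal.ofReal (1 / (n * ε ^ 2)) := by
  have := isProbabilityMeasure_sampleMeasure hf
  set a := ∫⁻ xy, expectedPerturbLoss h R m xy ∂D
  have hfin (i : Fin n) (s : (Fin n → X × Bool) × (Fin n → Fin k → Fin m → X)) :
      perturbLoss h (s.1 i).2 (s.2 i) < ∞ :=
    (perturbLoss_le_one _ _ _).trans_lt ENNReal.one_lt_top
  have hmean (i : Fin n) :
      ∫ s, (perturbLoss h (s.1 i).2 (s.2 i)).toReal ∂sampleMeasure D R n m = a.toReal := by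
    rw [integral_toReal (measurable_perturbLoss_sample hh i).aemeasurable
      (Filter.Eventually.of_forall (hfin i)), lintegral_perturbLoss_sampleMeasure hf hh i]
  have hunc : Pairwise fun i j =>
      ∫ s, (perturbLoss h (s.1 i).2 (s.2 i)).toReal * (perturbLoss h (s.1 j).2 (s.2 j)).toReal
        ∂sampleMeasure D R n m =
      (∫ s, (perturbLoss h (s.1 i).2 (s.2 i)).toReal ∂sampleMeasure D R n m) *
        ∫ s, (perturbLoss h (s.1 j).2 (s.2 j)).toReal ∂sampleMeasure D R n m := fun i j hij => by
    simp only [← ENNReal.toReal_mul]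
    rw [integral_toReal ((measurable_perturbLoss_sample hh i).fun_mul
        (measurable_perturbLoss_sample hh j)).aemeasurable
        (Filter.Eventually.of_forall fun s => ENNReal.mul_lt_top (hfin i s) (hfin j s)),
      lintegral_perturbLoss_mul_sampleMeasure hf hh hij, ENNReal.toReal_mul, hmean, hmean]
  have ha : ε ≤ a.toReal := by
    linarith [trueDRSet_le hm hh hε' hcov (aemeasurable_expectedPerturbLoss hf hh ⟨0, hn⟩)]
  have htail := measure_average_lt_le (fun i => (measurable_perturbLoss_sample hh i).ennreal_toReal)
    (fun i s => ⟨ENNReal.toReal_nonneg, ENNReal.toReal_le_of_le_ofReal zero_le_one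
      (by simpa using perturbLoss_le_one h (s.1 i).2 (s.2 i))⟩)
    hunc hn.ne' (half_pos hε) (t := ε / 2) fun i => by rw [hmean]; linarith
  simp_rw [empDR_eq]
  convert htail using 3
  ring

theorem two_fifths_le_sampleMeasure_empDR_ge
    (hf : AEMeasurable (sampleFiber R n m) (Measure.pi fun _ => D)) (hh : Measurable h)
    (hm : m ≠ 0) {U : X → Set (Measure X)} {ε ε' : ℝ} (hε : 0 < ε) (hε' : 0 ≤ ε')
    (hcov : ∀ x, ∀ u ∈ U x, ∃ j : Fin k, ∀ s : Set X, MeasurableSet s →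
      |(u s).toReal - (R x j s).toReal| ≤ ε')
    (hDR : ε + ε' ≤ trueDRSet D U h) (hn : 13 / ε ^ 2 ≤ n) :
    2 / 5 ≤ sampleMeasure D R n m {s | ε / 2 ≤ empDR h s.1 s.2} := by
  have := isProbabilityMeasure_sampleMeasure hf
  have hn13 : 13 ≤ n * ε ^ 2 := (div_le_iff₀ (by positivity)).1 hn
  have hn0 : 0 < n := Nat.pos_of_ne_zero fun h0 => by simp [h0] at hn13; linarith
  have htail := sampleMeasure_empDR_lt_le hf hh hn0 hm hε hε' hcov hDR
  calc (2 / 5 : ℝ≥0∞) = 1 - ENNReal.ofReal (3 / 5) := by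
        rw [← ENNReal.ofReal_one, ← ENNReal.ofReal_sub _ (by norm_num)]
        norm_num [ENNReal.ofReal_div_of_pos]
    _ ≤ 1 - sampleMeasure D R n m {s | empDR h s.1 s.2 < ε / 2} := by
        refine tsub_le_tsub_left (htail.trans (ENNReal.ofReal_le_ofReal ?_)) 1
        rw [div_le_iff₀ (by positivity)]
        linarith
    _ ≤ sampleMeasure D R n m {s | empDR h s.1 s.2 < ε / 2}ᶜ :=
        tsub_le_iff_left.2 (measure_univ.symm.trans_le (measure_univ_le_add_compl _))
    _ ≤ sampleMeasure D R n m {s | ε / 2 ≤ empDR h s.1 s.2} :=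
        measure_mono fun s hs => by simpa using hs

end Sample

end Model

theorem double_sampling_model1_realizable_general
    {X : Type*} [MeasurableSpace X] {k n m : ℕ}
    (H : Set (X → Bool)) (hH : ∀ h ∈ H, Measurable h)
    (D : Measure (X × Bool)) [IsProbabilityMeasure D]
    (U : X → Set (Measure X)) (hU : ∀ x, ∀ u ∈ U x, IsProbabilityMeasure u)
    (R : X → Fin k → Measure X) (hRsub : ∀ x j, R x j ∈ U x)
    (ε ε' : ℝ) (hε0 : 0 < ε) (hε1 : ε < 1) (hε'0 : 0 < ε')
    -- every `u ∈ U x` is within total variation distance `ε'` of some `R x j`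
    (hcov : ∀ x, ∀ u ∈ U x, ∃ j : Fin k, ∀ s : Set X, MeasurableSet s →
      |(u s).toReal - (R x j s).toReal| ≤ ε')
    (hn : 13 / ε ^ 2 ≤ (n : ℝ))
    (hm : 32 / ε ^ 2 * Real.log (200 / ε) ≤ (m : ℝ)) :
    2 / 5 * ((sampleMeasure D R n m).prod (sampleMeasure D R n m))
        {p | ∃ h ∈ H, empDR h p.1.1 p.1.2 = 0 ∧ ε + ε' ≤ trueDRSet D U h} ≤
      ((sampleMeasure D R n m).prod (sampleMeasure D R n m))
        {p | ∃ h ∈ H, empDR h p.1.1 p.1.2 = 0 ∧ ε / 2 ≤ empDR h p.2.1 p.2.2} := by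
  have : ∀ x j, IsProbabilityMeasure (R x j) := fun x j => hU x _ (hRsub x j)
  have hm0 : m ≠ 0 := by
    rintro rfl
    have : 0 < Real.log (200 / ε) := Real.log_pos ((one_lt_div hε0).2 (by linarith))
    have : 0 < 32 / ε ^ 2 * Real.log (200 / ε) := by positivity
    simp only [Nat.cast_zero] at hm
    linarith
  by_cases hf : AEMeasurable (sampleFiber R n m) (Measure.pi fun _ => D)
  swap
  · simp [sampleMeasure_eq_zero hf]
  have := isProbabilityMeasure_sampleMeasure hf
  change 2 / 5 * (sampleMeasure D R n m).prod (sampleMeasure D R n m)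
    (Prod.fst ⁻¹' {s | ∃ h ∈ H, empDR h s.1 s.2 = 0 ∧ ε + ε' ≤ trueDRSet D U h}) ≤ _
  refine le_measure_prod_of_le_measure_preimage fun s ⟨h, hh, hs, hDR⟩ => ?_
  exact (two_fifths_le_sampleMeasure_empDR_ge hf (hH h hh) hm0 hε0 hε'0.le hcov hDR hn).trans
    (measure_mono fun s' hs' => ⟨h, hh, hs, hs'⟩)

/-- **Lemma (Model I, double sampling, realizable case).** Suppose each (possibly
infinite) perturbation family `U x` admits a representative set `R x ⊆ U x` of at most
`k` distributions such that every `u ∈ U x` is within total variation distance `ε'` of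
some `R x j`.  Let `S` and `S'` be two independent samples, each consisting of
`n ≥ 13/ε²` i.i.d. clean examples from `D` together with `m ≥ (32/ε²)·log(200/ε)` i.i.d.
perturbations from each representative distribution `R x j` of each clean example.  Let
`A` be the event that some `h ∈ H` has `DR_S(h) = 0` but `DR_D(h) ≥ ε + ε'`, and `B` the
event that some `h ∈ H` has `DR_S(h) = 0` but `DR_{S'}(h) ≥ ε/2`.  Then
`P(B) ≥ (2/5)·P(A)`. -/
theorem double_sampling_model1_realizable
    {X : Type*} [MeasurableSpace X] {k n m : ℕ}
    (H : Set (X → Bool)) (hH : ∀ h ∈ H, Measurable h)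
    (D : Measure (X × Bool)) [IsProbabilityMeasure D]
    (U : X → Set (Measure X)) (hU : ∀ x, ∀ u ∈ U x, IsProbabilityMeasure u)
    (R : X → Fin k → Measure X) (hRsub : ∀ x j, R x j ∈ U x)
    (ε ε' : ℝ) (hε0 : 0 < ε) (hε1 : ε < 1) (hε'0 : 0 < ε') (hε'1 : ε' < 1)
    -- every `u ∈ U x` is within total variation distance `ε'` of some `R x j`
    (hcov : ∀ x, ∀ u ∈ U x, ∃ j : Fin k, ∀ s : Set X, MeasurableSet s →
      |(u s).toReal - (R x j s).toReal| ≤ ε')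
    (hn : 13 / ε ^ 2 ≤ (n : ℝ))
    (hm : 32 / ε ^ 2 * Real.log (200 / ε) ≤ (m : ℝ)) :
    2 / 5 * ((sampleMeasure D R n m).prod (sampleMeasure D R n m))
        {p | ∃ h ∈ H, empDR h p.1.1 p.1.2 = 0 ∧ ε + ε' ≤ trueDRSet D U h} ≤
      ((sampleMeasure D R n m).prod (sampleMeasure D R n m))
        {p | ∃ h ∈ H, empDR h p.1.1 p.1.2 = 0 ∧ ε / 2 ≤ empDR h p.2.1 p.2.2} :=
  double_sampling_model1_realizable_general H hH D U hU R hRsub ε ε' hε0 hε1 hε'0 hcov hn hm
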